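/- arXiv:0807.3451 — 4 statements merged into one kernel-verified Lean document; each statement's English description precedes it below -/
import Mathlib

section
/- Given a query Q and a clause r := H ← c ◇ B, there exists a CLP derivation step of Q with respect to r if and only if Set(Q) ∩ Set(⟨H | c⟩) ≠ ∅. -/
/- A semantic formalization of CLP(X) queries, clauses, derivation steps,
   filters and derivation-neutrality, following Payet & Mesnard. -/

namespace CLP

variable {V D Pr : Type}

/-- A (semantic) term: its evaluation under every valuation. -/
abbrev Trm (V D : Type) := (V → D) → D
/-- A (semantic) constraint: its truth value under every valuation. -/
abbrev Cns (V D : Type) := (V → D) → Prop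

/-- The term consisting of a single variable. -/
def varT (x : V) : Trm V D := fun v => v x

/-- An atom whose arguments are domain elements. -/
structure Atom (D Pr : Type) where
  pred : Pr
  args : List D

/-- A query ⟨p(t̃) | d⟩. -/
structure Query (V D Pr : Type) where
  pred : Pr
  args : List (Trm V D)
  constr : Cns V D

/-- The set of atoms described by a query: Set(⟨p(t̃) | d⟩) = {p([t̃]_v) | D ⊨_v d}. -/
def Query.descSet (Q : Query V D Pr) : Set (Atom D Pr) :=
  { A | ∃ v : V → D, Q.constr v ∧ A = ⟨Q.pred, Q.args.map (fun t => t v)⟩ }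

/-- Applying a renaming (a bijection on variables) to a query. -/
def Query.rename (γ : V ≃ V) (Q : Query V D Pr) : Query V D Pr :=
  ⟨Q.pred, Q.args.map (fun t v => t (v ∘ γ)), fun v => Q.constr (v ∘ γ)⟩

/-- A term only depends on (is supported by) the variables in `S`. -/
def Trm.supp (t : Trm V D) (S : Set V) : Prop :=
  ∀ v w : V → D, (∀ x ∈ S, v x = w x) → t v = t w

/-- A constraint only depends on (is supported by) the variables in `S`. -/
def Cns.supp (c : Cns V D) (S : Set V) : Prop :=
  ∀ v w : V → D, (∀ x ∈ S, v x = w x) → (c v ↔ c w)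

/-- All the variables of the query lie in `S`. -/
def Query.suppBy (Q : Query V D Pr) (S : Set V) : Prop :=
  (∀ t ∈ Q.args, Trm.supp t S) ∧ Cns.supp Q.constr S

/-- The query has finitely many variables (as every syntactic query does). -/
def Query.finSupp (Q : Query V D Pr) : Prop := ∃ S : Finset V, Q.suppBy ↑S

/-- The constraint s̃ = t̃ (componentwise equality of two sequences of terms). -/
def EqArgs (a b : List (Trm V D)) (v : V → D) : Prop :=
  a.length = b.length ∧ ∀ pr ∈ a.zip b, pr.1 v = pr.2 v

/-- A binary clause H ← c ◇ B. -/
structure Clause (V D Pr : Type) where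
  hpred : Pr
  hargs : List (Trm V D)
  constr : Cns V D
  bpred : Pr
  bargs : List (Trm V D)

/-- The query ⟨H | c⟩. -/
def Clause.headQuery (r : Clause V D Pr) : Query V D Pr := ⟨r.hpred, r.hargs, r.constr⟩
/-- The query ⟨B | c⟩. -/
def Clause.bodyQuery (r : Clause V D Pr) : Query V D Pr := ⟨r.bpred, r.bargs, r.constr⟩

/-- Applying a renaming to a clause (producing a variant of the clause). -/
def Clause.rename (γ : V ≃ V) (r : Clause V D Pr) : Clause V D Pr :=
  ⟨r.hpred, r.hargs.map (fun t v => t (v ∘ γ)), fun v => r.constr (v ∘ γ),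
   r.bpred, r.bargs.map (fun t v => t (v ∘ γ))⟩

/-- All the variables of the clause lie in `S`. -/
def Clause.suppBy (r : Clause V D Pr) (S : Set V) : Prop :=
  (∀ t ∈ r.hargs ++ r.bargs, Trm.supp t S) ∧ Cns.supp r.constr S

/-- The clause has finitely many variables. -/
def Clause.finSupp (r : Clause V D Pr) : Prop := ∃ S : Finset V, r.suppBy ↑S

/-- The constraint s̃ = ũ ∧ c ∧ d of the derived query, where the input clause is
    r' = p(s̃) ← c ◇ q(t̃) and the current query is Q = ⟨p(ũ) | d⟩. -/
def stepCns (r' : Clause V D Pr) (Q : Query V D Pr) : Cns V D :=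
  fun v => EqArgs r'.hargs Q.args v ∧ r'.constr v ∧ Q.constr v

/-- A derivation step Q ⟹_r Q₁: there is a variant r' of r variable-disjoint from Q
    (the input clause) such that the constraint s̃ = ũ ∧ c ∧ d is satisfiable, and
    Q₁ = ⟨q(t̃) | s̃ = ũ ∧ c ∧ d⟩. -/
def Step (r : Clause V D Pr) (Q Q₁ : Query V D Pr) : Prop :=
  ∃ γ : V ≃ V, ∃ S S' : Set V,
    Q.suppBy S ∧ (r.rename γ).suppBy S' ∧ Disjoint S S' ∧
    Q.pred = r.hpred ∧
    (∃ v, stepCns (r.rename γ) Q v) ∧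
    Q₁ = ⟨(r.rename γ).bpred, (r.rename γ).bargs, stepCns (r.rename γ) Q⟩

/-- Q₀ loops w.r.t. the program `Prog`: there is an infinite derivation of Prog ∪ {Q₀}. -/
def Loops (Prog : Set (Clause V D Pr)) (Q₀ : Query V D Pr) : Prop :=
  ∃ Qs : ℕ → Query V D Pr, Qs 0 = Q₀ ∧ ∀ n, ∃ r ∈ Prog, Step r (Qs n) (Qs (n + 1))

/-- Projection of a sequence onto a set of (0-based) positions, in increasing order. -/
def projArgs {α : Type} (s : Finset ℕ) (l : List α) : List α :=
  ((s.filter (· < l.length)).sort (· ≤ ·)).filterMap (fun i => l[i]?)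

/-- Projection of a query on a set of positions τ. -/
def Query.proj (τ : Pr → Finset ℕ) (Q : Query V D Pr) : Query V D Pr :=
  ⟨Q.pred, projArgs (τ Q.pred) Q.args, Q.constr⟩

/-- Projection of a query on the complementary set of positions τ̄. -/
def Query.coproj (τ : Pr → Finset ℕ) (Q : Query V D Pr) : Query V D Pr :=
  ⟨Q.pred, projArgs (Finset.range Q.args.length \ τ Q.pred) Q.args, Q.constr⟩

/-- A filter Δ = (τ, δ): a set of positions together with, for each predicate,
    a query over the projected predicate whose constraint is satisfiable. -/
structure PFilter (V D Pr : Type) where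
  pos : Pr → Finset ℕ
  delta : Pr → Query V D Pr
  delta_pred : ∀ p, (delta p).pred = p
  delta_sat : ∀ p, ∃ v, (delta p).constr v

/-- Q satisfies Δ when Set(Q|_τ) ⊆ Set(δ(rel(Q))). -/
def PFilter.Satisfies (Δ : PFilter V D Pr) (Q : Query V D Pr) : Prop :=
  (Q.proj Δ.pos).descSet ⊆ (Δ.delta Q.pred).descSet

/-- Q' is Δ-more general than Q. -/
def PFilter.MoreGen (Δ : PFilter V D Pr) (Q' Q : Query V D Pr) : Prop :=
  (Q.coproj Δ.pos).descSet ⊆ (Q'.coproj Δ.pos).descSet ∧ Δ.Satisfies Q'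

/-- Δ is derivation neutral (DN) for the clause r. -/
def PFilter.DN (Δ : PFilter V D Pr) (r : Clause V D Pr) : Prop :=
  ∀ Q Q₁ : Query V D Pr, Q.finSupp → Step r Q Q₁ →
    Δ.Satisfies Q₁ ∧
    ∀ Q' : Query V D Pr, Q'.finSupp → Δ.MoreGen Q' Q →
      ∃ Q₁', Step r Q' Q₁' ∧ Δ.MoreGen Q₁' Q₁

/-- sat(ũ, Q): taking a fresh variant of Q and existentially quantifying its variables,
    the values of ũ can be matched with the arguments of Q while its constraint holds. -/
def satC (us : List (Trm V D)) (Q : Query V D Pr) : Cns V D :=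
  fun v => ∃ w : V → D, us.length = Q.args.length ∧
    (∀ pr ∈ us.zip Q.args, pr.1 v = pr.2 w) ∧ Q.constr w

/-- First DNlog condition: D ⊨ c → ∀_{X̃|τ(p)} [sat(X̃|τ(p), δ(p)) → ∃_𝒴 c],
    with 𝒴 = Ỹ|τ(q) ∪ local_vars(r). -/
def DNlog1 (Δ : PFilter V D Pr) (p q : Pr) (Xs Ys : List V) (L : Set V) (c : Cns V D) : Prop :=
  ∀ v : V → D, c v →
    ∀ v' : V → D, (∀ x : V, x ∉ projArgs (Δ.pos p) Xs → v' x = v x) →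
      satC ((projArgs (Δ.pos p) Xs).map varT) (Δ.delta p) v' →
      ∃ w : V → D, (∀ x : V, x ∉ projArgs (Δ.pos q) Ys → x ∉ L → w x = v' x) ∧ c w

/-- Second DNlog condition: D ⊨ c → sat(Ỹ|τ(q), δ(q)). -/
def DNlog2 (Δ : PFilter V D Pr) (q : Pr) (Ys : List V) (c : Cns V D) : Prop :=
  ∀ v : V → D, c v → satC ((projArgs (Δ.pos q) Ys).map varT) (Δ.delta q) v

/-- Δ is DNlog for the clause p(X̃) ← c ◇ q(Ỹ) with local variables L. -/
def DNlog (Δ : PFilter V D Pr) (p q : Pr) (Xs Ys : List V) (L : Set V) (c : Cns V D) : Prop :=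
  DNlog1 Δ p q Xs Ys L c ∧ DNlog2 Δ q Ys c

end CLP

namespace CLP

variable {V D Pr : Type}

theorem exists_equiv_disjoint_image [Infinite V] {S T : Set V} (hS : S.Finite) (hT : T.Finite) :
    ∃ γ : V ≃ V, Disjoint S (γ '' T) := by
  have : Infinite (Sᶜ : Set V) := hS.infinite_compl.to_subtype
  obtain ⟨f⟩ : Nonempty (T ↪ (Sᶜ : Set V)) :=
    Cardinal.le_def _ _ |>.1 (hT.lt_aleph0.le.trans (Cardinal.aleph0_le_mk _))
  obtain ⟨γ, hγ⟩ := Cardinal.extend_function_of_lt (f.trans (Function.Embedding.subtype _))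
    (hT.lt_aleph0.trans_le (Cardinal.aleph0_le_mk V)) ⟨Equiv.refl V⟩
  refine ⟨γ, Set.disjoint_right.2 ?_⟩
  rintro _ ⟨x, hx, rfl⟩
  rw [hγ ⟨x, hx⟩]
  exact (f ⟨x, hx⟩).2

theorem eqArgs_iff_map_eq {a b : List (Trm V D)} {v : V → D} :
    EqArgs a b v ↔ a.map (fun t => t v) = b.map (fun t => t v) := by
  induction a generalizing b with
  | nil => cases b <;> simp [EqArgs]
  | cons t a ih =>
    cases b with
    | nil => simp [EqArgs]
    | cons s b => simp [EqArgs, ← ih, and_left_comm]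

theorem Query.suppBy.map_args_eq {Q : Query V D Pr} {S : Set V} (hQ : Q.suppBy S)
    {v w : V → D} (hvw : ∀ x ∈ S, v x = w x) :
    Q.args.map (fun t => t v) = Q.args.map (fun t => t w) :=
  List.map_congr_left fun t ht => hQ.1 t ht v w hvw

theorem Clause.suppBy.map_hargs_eq {r : Clause V D Pr} {S : Set V} (hr : r.suppBy S)
    {v w : V → D} (hvw : ∀ x ∈ S, v x = w x) :
    r.hargs.map (fun t => t v) = r.hargs.map (fun t => t w) :=
  List.map_congr_left fun t ht => hr.1 t (List.mem_append_left _ ht) v w hvw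

theorem Clause.suppBy.rename {r : Clause V D Pr} {S : Set V} (hr : r.suppBy S) (γ : V ≃ V) :
    (r.rename γ).suppBy (γ '' S) := by
  have hcomp {v w : V → D} (hvw : ∀ x ∈ γ '' S, v x = w x) : ∀ x ∈ S, (v ∘ γ) x = (w ∘ γ) x :=
    fun x hx => hvw (γ x) (Set.mem_image_of_mem γ hx)
  refine ⟨?_, fun v w hvw => hr.2 _ _ (hcomp hvw)⟩
  simp only [Clause.rename, ← List.map_append, List.forall_mem_map]
  exact fun t ht v w hvw => hr.1 t ht _ _ (hcomp hvw)

theorem stepCns_rename_iff {r : Clause V D Pr} {Q : Query V D Pr} {γ : V ≃ V} {v : V → D} :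
    stepCns (r.rename γ) Q v ↔
      r.hargs.map (fun t => t (v ∘ γ)) = Q.args.map (fun t => t v) ∧
        r.constr (v ∘ γ) ∧ Q.constr v := by
  simp only [stepCns, eqArgs_iff_map_eq, Clause.rename, List.map_map]
  rfl

theorem inter_descSet_headQuery_nonempty_iff {Q : Query V D Pr} {r : Clause V D Pr} :
    (Q.descSet ∩ r.headQuery.descSet).Nonempty ↔
      Q.pred = r.hpred ∧ ∃ v w, Q.constr v ∧ r.constr w ∧
        r.hargs.map (fun t => t w) = Q.args.map (fun t => t v) := by
  constructor
  · rintro ⟨A, ⟨v, hv, rfl⟩, ⟨w, hw, hA⟩⟩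
    simp only [Clause.headQuery, Atom.mk.injEq] at hA
    exact ⟨hA.1, v, w, hv, hw, hA.2.symm⟩
  · rintro ⟨hpred, v, w, hv, hw, hvw⟩
    exact ⟨_, ⟨v, hv, rfl⟩, ⟨w, hw, by simp [Clause.headQuery, hpred, hvw]⟩⟩

theorem Step.inter_descSet_headQuery_nonempty {r : Clause V D Pr} {Q Q₁ : Query V D Pr}
    (h : Step r Q Q₁) : (Q.descSet ∩ r.headQuery.descSet).Nonempty := by
  obtain ⟨γ, -, -, -, -, -, hpred, ⟨v, hv⟩, -⟩ := h
  obtain ⟨hargs, hc, hd⟩ := stepCns_rename_iff.1 hv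
  exact inter_descSet_headQuery_nonempty_iff.2 ⟨hpred, v, v ∘ γ, hd, hc, hargs⟩

-- A fresh variant of `r` is obtained by renaming its variables apart from those of `Q`; the two
-- witnessing valuations are then glued along these disjoint supports.
theorem exists_step_of_inter_descSet_headQuery_nonempty [Infinite V] {r : Clause V D Pr}
    {Q : Query V D Pr} (hQ : Q.finSupp) (hr : r.finSupp)
    (h : (Q.descSet ∩ r.headQuery.descSet).Nonempty) : ∃ Q₁, Step r Q Q₁ := by
  obtain ⟨hpred, v, w, hv, hw, hvw⟩ := inter_descSet_headQuery_nonempty_iff.1 h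
  obtain ⟨SQ, hSQ⟩ := hQ
  obtain ⟨Sr, hSr⟩ := hr
  obtain ⟨γ, hdisj⟩ := exists_equiv_disjoint_image SQ.finite_toSet Sr.finite_toSet
  classical
  let u := (γ '' Sr).piecewise (w ∘ γ.symm) v
  have huv : ∀ x ∈ (SQ : Set V), u x = v x := fun x hx =>
    Set.piecewise_eq_of_notMem _ _ _ (hdisj.notMem_of_mem_left hx)
  have huw : ∀ x ∈ (Sr : Set V), (u ∘ γ) x = w x := fun x hx => by
    simp [u, Set.piecewise_eq_of_mem _ _ _ (Set.mem_image_of_mem γ hx)]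
  refine ⟨_, γ, SQ, γ '' Sr, hSQ, hSr.rename γ, hdisj, hpred,
    ⟨u, stepCns_rename_iff.2 ⟨?_, (hSr.2 _ _ huw).2 hw, (hSQ.2 _ _ huv).2 hv⟩⟩, rfl⟩
  rw [hSr.map_hargs_eq huw, hSQ.map_args_eq huv, hvw]

end CLP

theorem step_iff_inter_nonempty {D Pr : Type} (r : CLP.Clause ℕ D Pr)
    (Q : CLP.Query ℕ D Pr) (hQ : Q.finSupp) (hr : r.finSupp) :
    (∃ Q₁, CLP.Step r Q Q₁) ↔ (Q.descSet ∩ r.headQuery.descSet).Nonempty :=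
  ⟨fun ⟨_, h⟩ => h.inter_descSet_headQuery_nonempty,
    CLP.exists_step_of_inter_descSet_headQuery_nonempty hQ hr⟩
end

section
/- (Lifting Theorem) If there is a derivation step Q ⟹_r Q₁ and Q' is a query more general than Q (i.e., Set(Q) ⊆ Set(Q')), then there exists a derivation step Q' ⟹_r Q₁' such that Q₁' is more general than Q₁. -/
/-!
A variant of `r` shares no variable with `Q`, so a valuation of the clause and a valuation of the
query can be glued into one valuation. Hence every step `Q ⟹_r Q₁` has
`Set(Q₁) = {q(t̃ x) | c x ∧ p(s̃ x) ∈ Set(Q)}`, whichever variant is used. This set is monotone in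
`Set(Q)`, and a step from `Q'` exists as soon as it is nonempty, because finitely supported `r` and
`Q'` always admit a variable-disjoint variant of `r`.
-/

namespace CLP

variable {V D Pr : Type}

lemma eqArgs_iff {a b : List (Trm V D)} {v : V → D} :
    EqArgs a b v ↔ a.map (· v) = b.map (· v) := by
  induction a generalizing b with
  | nil => cases b <;> simp [EqArgs]
  | cons s a ih =>
    cases b with
    | nil => simp [EqArgs]
    | cons t b =>
      rw [List.map_cons, List.map_cons, List.cons_eq_cons, ← ih]
      simp [EqArgs, and_left_comm]

lemma map_eval_eq_of_supp {ts : List (Trm V D)} {S : Set V} {u w : V → D}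
    (hts : ∀ t ∈ ts, t.supp S) (h : ∀ x ∈ S, u x = w x) : ts.map (· u) = ts.map (· w) :=
  List.map_congr_left fun t ht => hts t ht u w h

lemma exists_perm_disjoint_image [Infinite V] (S T : Finset V) :
    ∃ γ : Equiv.Perm V, Disjoint (T : Set V) (γ '' S) := by
  classical
  obtain ⟨U, hTU, hU⟩ := Infinite.exists_superset_card_eq T (T.card + S.card) (by omega)
  obtain ⟨γ, hγ⟩ := Equiv.Perm.exists_map_finset_eq S (U \ T)
    (by rw [Finset.card_sdiff_of_subset hTU]; omega)
  refine ⟨γ, ?_⟩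
  rw [← Equiv.coe_toEmbedding, ← Finset.coe_map, hγ, Finset.disjoint_coe]
  exact Finset.disjoint_sdiff

def resolvent (r' : Clause V D Pr) (Q : Query V D Pr) : Query V D Pr :=
  ⟨r'.bpred, r'.bargs, stepCns r' Q⟩

def Clause.bodyInstances (r : Clause V D Pr) (A : Set (Atom D Pr)) : Set (Atom D Pr) :=
  { B | ∃ x : V → D, r.constr x ∧ ⟨r.hpred, r.hargs.map (· x)⟩ ∈ A ∧
      B = ⟨r.bpred, r.bargs.map (· x)⟩ }

lemma Clause.bodyInstances_mono (r : Clause V D Pr) {A B : Set (Atom D Pr)} (h : A ⊆ B) :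
    r.bodyInstances A ⊆ r.bodyInstances B := by
  rintro _ ⟨x, hc, hA, rfl⟩
  exact ⟨x, hc, h hA, rfl⟩

lemma Clause.suppBy_rename {r : Clause V D Pr} {S : Set V} (γ : V ≃ V) (h : r.suppBy S) :
    (r.rename γ).suppBy (γ '' S) := by
  obtain ⟨hargs, hc⟩ := h
  constructor
  · intro t ht
    simp only [Clause.rename, ← List.map_append] at ht
    obtain ⟨t₀, ht₀, rfl⟩ := List.mem_map.1 ht
    exact fun v w hvw => hargs t₀ ht₀ _ _ fun x hx => hvw (γ x) ⟨x, hx, rfl⟩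
  · exact fun v w hvw => hc _ _ fun x hx => hvw (γ x) ⟨x, hx, rfl⟩

lemma map_eval_rename (f : V → V) (ts : List (Trm V D)) (v : V → D) :
    (ts.map fun t v => t (v ∘ f)).map (· v) = ts.map (· (v ∘ f)) := by
  simp [Function.comp_def]

lemma descSet_resolvent_rename_subset {r : Clause V D Pr} {Q : Query V D Pr} (γ : V ≃ V)
    (hpred : Q.pred = r.hpred) :
    (resolvent (r.rename γ) Q).descSet ⊆ r.bodyInstances Q.descSet := by
  rintro _ ⟨v, ⟨heq, hc, hQ⟩, rfl⟩
  rw [eqArgs_iff] at heq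
  refine ⟨v ∘ γ, hc, ⟨v, hQ, ?_⟩, ?_⟩
  · simp only [Clause.rename, map_eval_rename] at heq
    rw [hpred, heq]
  · simp only [resolvent, Clause.rename, map_eval_rename]

lemma bodyInstances_subset_descSet_resolvent {r : Clause V D Pr} {Q : Query V D Pr}
    {S S' : Set V} {γ : V ≃ V} (hQ : Q.suppBy S) (hr : (r.rename γ).suppBy S')
    (hS : Disjoint S S') :
    r.bodyInstances Q.descSet ⊆ (resolvent (r.rename γ) Q).descSet := by
  classical
  rintro _ ⟨x, hc, ⟨w, hw, hA⟩, rfl⟩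
  obtain ⟨hpred, hargs⟩ := Atom.mk.inj hA
  set u := S.piecewise w (x ∘ γ.symm)
  have huQ : ∀ y ∈ S, u y = w y := fun y hy => S.piecewise_eq_of_mem _ _ hy
  have hur : ∀ y ∈ S', u y = (x ∘ γ.symm) y := fun y hy =>
    S.piecewise_eq_of_notMem _ _ (hS.notMem_of_mem_right hy)
  have hx : (x ∘ γ.symm) ∘ γ = x := by ext; simp
  have hhead : r.hargs.map (· (u ∘ γ)) = r.hargs.map (· x) := by
    simpa only [Clause.rename, map_eval_rename, hx] using
      map_eval_eq_of_supp (fun t ht => hr.1 t (List.mem_append_left _ ht)) hur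
  have hbody : r.bargs.map (· (u ∘ γ)) = r.bargs.map (· x) := by
    simpa only [Clause.rename, map_eval_rename, hx] using
      map_eval_eq_of_supp (fun t ht => hr.1 t (List.mem_append_right _ ht)) hur
  refine ⟨u, ⟨?_, (hr.2 _ _ hur).2 ?_, (hQ.2 _ _ huQ).2 hw⟩, ?_⟩
  · rw [eqArgs_iff, map_eval_eq_of_supp hQ.1 huQ, ← hargs, ← hhead]
    simp only [Clause.rename, map_eval_rename]
  · simpa only [Clause.rename, hx] using hc
  · simp only [resolvent, Clause.rename, map_eval_rename, hbody]

lemma Step.descSet_eq {r : Clause V D Pr} {Q Q₁ : Query V D Pr} (h : Step r Q Q₁) :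
    Q₁.descSet = r.bodyInstances Q.descSet := by
  obtain ⟨γ, S, S', hQ, hr, hS, hpred, -, rfl⟩ := h
  exact (descSet_resolvent_rename_subset γ hpred).antisymm
    (bodyInstances_subset_descSet_resolvent hQ hr hS)

lemma Step.descSet_nonempty {r : Clause V D Pr} {Q Q₁ : Query V D Pr} (h : Step r Q Q₁) :
    Q₁.descSet.Nonempty := by
  obtain ⟨γ, S, S', -, -, -, -, ⟨v, hv⟩, rfl⟩ := h
  exact ⟨_, v, hv, rfl⟩

lemma exists_step [Infinite V] {r : Clause V D Pr} {Q : Query V D Pr} (hr : r.finSupp)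
    (hQ : Q.finSupp) (hne : (r.bodyInstances Q.descSet).Nonempty) : ∃ Q₁, Step r Q Q₁ := by
  obtain ⟨T, hT⟩ := hr
  obtain ⟨T', hT'⟩ := hQ
  obtain ⟨γ, hγ⟩ := exists_perm_disjoint_image T T'
  have hrγ := Clause.suppBy_rename γ hT
  obtain ⟨_, v, hv, -⟩ := hne.mono (bodyInstances_subset_descSet_resolvent hT' hrγ hγ)
  obtain ⟨_, x, -, ⟨w, -, hA⟩, -⟩ := hne
  exact ⟨_, γ, T', γ '' T, hT', hrγ, hγ, (Atom.mk.inj hA).1.symm, ⟨v, hv⟩, rfl⟩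

end CLP

theorem lifting {D Pr : Type} (r : CLP.Clause ℕ D Pr) (hr : r.finSupp)
    (Q Q₁ Q' : CLP.Query ℕ D Pr) (hQ' : Q'.finSupp)
    (hstep : CLP.Step r Q Q₁) (hmg : Q.descSet ⊆ Q'.descSet) :
    ∃ Q₁', CLP.Step r Q' Q₁' ∧ Q₁.descSet ⊆ Q₁'.descSet := by
  have hinst := r.bodyInstances_mono hmg
  have hne : (r.bodyInstances Q.descSet).Nonempty := hstep.descSet_eq ▸ hstep.descSet_nonempty
  obtain ⟨Q₁', hstep'⟩ := CLP.exists_step hr hQ' (hne.mono hinst)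
  exact ⟨Q₁', hstep', hstep.descSet_eq ▸ hstep'.descSet_eq ▸ hinst⟩
end

section
/- Let r := H ← c ◇ B be a clause. If the query ⟨B | c⟩ is more general than ⟨H | c⟩ (i.e., Set(⟨H | c⟩) ⊆ Set(⟨B | c⟩)), then the query ⟨H | c⟩ loops with respect to {r}, i.e., there exists an infinite derivation of {r} ∪ {⟨H | c⟩}. -/
section Aux
open CLP Function

/-- An involutive shift permutation on ℕ pushing `[0,M)` up to `[M,2M)`. -/
noncomputable def shiftPerm (M : ℕ) : Equiv.Perm ℕ :=
  Function.Involutive.toPerm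
    (fun x => if x < M then x + M else if x < 2 * M then x - M else x)
    (by intro x; dsimp only; split_ifs <;> omega)

lemma shiftPerm_lt {M x : ℕ} (h : x < M) : shiftPerm M x = x + M := by
  simp [shiftPerm, Involutive.toPerm, h]

lemma rename_suppBy {D Pr : Type} (γ : Equiv.Perm ℕ) (r : CLP.Clause ℕ D Pr) (T : Set ℕ)
    (h : r.suppBy T) : (r.rename γ).suppBy (⇑γ '' T) := by
  constructor
  · intro t ht
    have hex : ∃ t₀ ∈ r.hargs ++ r.bargs, t = fun v => t₀ (v ∘ γ) := by
      simp only [CLP.Clause.rename, List.mem_append, List.mem_map] at ht ⊢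
      rcases ht with ⟨t₀, h₀, rfl⟩ | ⟨t₀, h₀, rfl⟩
      · exact ⟨t₀, Or.inl h₀, rfl⟩
      · exact ⟨t₀, Or.inr h₀, rfl⟩
    obtain ⟨t₀, h₀, rfl⟩ := hex
    intro v w hvw
    exact h.1 t₀ h₀ _ _ (fun x hx => hvw (γ x) ⟨x, hx, rfl⟩)
  · intro v w hvw
    exact h.2 _ _ (fun x hx => hvw (γ x) ⟨x, hx, rfl⟩)

lemma stepCns_supp {D Pr : Type} (r' : CLP.Clause ℕ D Pr) (Q : CLP.Query ℕ D Pr)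
    (S T : Set ℕ) (hQ : Q.suppBy S) (hr' : r'.suppBy T) :
    CLP.Cns.supp (CLP.stepCns r' Q) (S ∪ T) := by
  have aux : ∀ v w : ℕ → D, (∀ x ∈ S ∪ T, v x = w x) →
      CLP.stepCns r' Q v → CLP.stepCns r' Q w := by
    rintro v w hvw ⟨⟨h1, h2⟩, h3, h4⟩
    have hS' : ∀ x ∈ S, v x = w x := fun x hx => hvw x (Or.inl hx)
    have hT' : ∀ x ∈ T, v x = w x := fun x hx => hvw x (Or.inr hx)
    refine ⟨⟨h1, ?_⟩, (hr'.2 v w hT').mp h3, (hQ.2 v w hS').mp h4⟩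
    rintro ⟨a, b⟩ hpr
    obtain ⟨hm1, hm2⟩ := List.of_mem_zip hpr
    calc a w = a v := hr'.1 a (List.mem_append_left _ hm1) w v (fun x hx => (hT' x hx).symm)
      _ = b v := h2 (a, b) hpr
      _ = b w := hQ.1 b hm2 v w hS'
  intro v w hvw
  exact ⟨aux v w hvw, aux w v (fun x hx => (hvw x hx).symm)⟩

end Aux

theorem head_loops_of_body_more_general {D Pr : Type} (r : CLP.Clause ℕ D Pr)
    (hr : r.finSupp) (hc : ∃ v, r.constr v)
    (hmg : r.headQuery.descSet ⊆ r.bodyQuery.descSet) :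
    CLP.Loops {r} r.headQuery := by
  classical
  obtain ⟨T, hT⟩ := hr
  obtain ⟨u0, hu0⟩ := hc
  have hmem0 : (⟨r.hpred, r.hargs.map (fun t => t u0)⟩ : CLP.Atom D Pr)
      ∈ r.headQuery.descSet := ⟨u0, hu0, rfl⟩
  obtain ⟨u1, hu1, heq1⟩ := hmg hmem0
  have hpq : r.hpred = r.bpred := congrArg CLP.Atom.pred heq1
  -- the key self-step lemma
  have key : ∀ Q : CLP.Query ℕ D Pr,
      (Q.finSupp ∧ Q.pred = r.hpred ∧ r.headQuery.descSet ⊆ Q.descSet) →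
      ∃ Q₁, CLP.Step r Q Q₁ ∧
        (Q₁.finSupp ∧ Q₁.pred = r.hpred ∧ r.headQuery.descSet ⊆ Q₁.descSet) := by
    rintro Q ⟨⟨S, hS⟩, hQpred, hQsub⟩
    set M : ℕ := (S ∪ T).sup id + 1 with hM
    set γ : Equiv.Perm ℕ := shiftPerm M with hγ
    have hTlt : ∀ x ∈ T, x < M :=
      fun x hx => Nat.lt_succ_of_le (Finset.le_sup (f := id) (Finset.mem_union_right _ hx))
    have hSlt : ∀ x ∈ S, x < M :=
      fun x hx => Nat.lt_succ_of_le (Finset.le_sup (f := id) (Finset.mem_union_left _ hx))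
    have hdisj : Disjoint (↑S : Set ℕ) (⇑γ '' ↑T) := by
      rw [Set.disjoint_left]
      rintro a haS ⟨x, hxT, rfl⟩
      have h2 : γ x = x + M := shiftPerm_lt (hTlt x (Finset.mem_coe.mp hxT))
      have h1 := hSlt _ (Finset.mem_coe.mp haS)
      omega
    have hT' : (r.rename γ).suppBy (⇑γ '' ↑T) := rename_suppBy γ r ↑T hT
    -- construction of the combined valuation
    have mkv : ∀ u : ℕ → D, r.constr u → ∀ w : ℕ → D, Q.constr w →
        Q.args.map (fun t => t w) = r.hargs.map (fun t => t u) →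
        ∃ v : ℕ → D, CLP.stepCns (r.rename γ) Q v ∧
          (r.rename γ).bargs.map (fun t => t v) = r.bargs.map (fun t => t u) := by
      intro u hu w hw heq
      let v : ℕ → D := fun x => if x ∈ ⇑γ '' (↑T : Set ℕ) then u (γ.symm x) else w x
      have hvS : ∀ x ∈ (↑S : Set ℕ), v x = w x := by
        intro x hx
        have hni : x ∉ ⇑γ '' (↑T : Set ℕ) := fun h => Set.disjoint_left.mp hdisj hx h
        show (if x ∈ ⇑γ '' (↑T : Set ℕ) then u (γ.symm x) else w x) = w x
        exact if_neg hni
      have hvT : ∀ x ∈ (↑T : Set ℕ), (v ∘ γ) x = u x := by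
        intro x hx
        have hx' : γ x ∈ ⇑γ '' (↑T : Set ℕ) := ⟨x, hx, rfl⟩
        show (if γ x ∈ ⇑γ '' (↑T : Set ℕ) then u (γ.symm (γ x)) else w (γ x)) = u x
        rw [if_pos hx', Equiv.symm_apply_apply]
      have hlen : Q.args.length = r.hargs.length := by
        have h := congrArg List.length heq; simpa using h
      refine ⟨v, ⟨⟨?_, ?_⟩, ?_, ?_⟩, ?_⟩
      · simp [CLP.Clause.rename, hlen]
      · intro pr hpr
        rw [List.mem_iff_getElem] at hpr
        obtain ⟨i, hi, rfl⟩ := hpr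
        have hib : i < r.hargs.length := by
          simp [CLP.Clause.rename] at hi; omega
        have hib' : i < Q.args.length := by omega
        simp only [List.getElem_zip, CLP.Clause.rename, List.getElem_map]
        have e2 : r.hargs[i] (v ∘ γ) = r.hargs[i] u :=
          hT.1 _ (List.mem_append_left _ (r.hargs.getElem_mem hib)) _ _ hvT
        have e3 : Q.args[i] w = r.hargs[i] u := by
          have h2 : (Q.args.map (fun t => t w))[i]? = (r.hargs.map (fun t => t u))[i]? := by
            rw [heq]
          rw [List.getElem?_map, List.getElem?_map, List.getElem?_eq_getElem hib',
            List.getElem?_eq_getElem hib] at h2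
          simpa using h2
        have e4 : Q.args[i] w = Q.args[i] v :=
          hS.1 _ (Q.args.getElem_mem hib') _ _ (fun x hx => (hvS x hx).symm)
        calc r.hargs[i] (v ∘ γ) = r.hargs[i] u := e2
          _ = Q.args[i] w := e3.symm
          _ = Q.args[i] v := e4
      · show r.constr (v ∘ γ)
        exact (hT.2 _ _ hvT).mpr hu
      · exact (hS.2 v w hvS).mpr hw
      · show ((r.bargs.map (fun t v => t (v ∘ γ))).map (fun t => t v)) =
          r.bargs.map (fun t => t u)
        rw [List.map_map]
        exact List.map_congr_left
          (fun t ht => hT.1 t (List.mem_append_right _ ht) _ _ hvT)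
    -- satisfiability of the step constraint
    obtain ⟨w0, hw0, heqw0⟩ : ∃ w, Q.constr w ∧
        Q.args.map (fun t => t w) = r.hargs.map (fun t => t u0) := by
      obtain ⟨w, hw, hAw⟩ := hQsub hmem0
      refine ⟨w, hw, ?_⟩
      have h := congrArg CLP.Atom.args hAw
      exact h.symm
    obtain ⟨v0, hv0, -⟩ := mkv u0 hu0 w0 hw0 heqw0
    refine ⟨⟨(r.rename γ).bpred, (r.rename γ).bargs, CLP.stepCns (r.rename γ) Q⟩,
      ⟨γ, ↑S, ⇑γ '' ↑T, hS, hT', hdisj, hQpred, ⟨v0, hv0⟩, rfl⟩, ?_, hpq.symm, ?_⟩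
    · -- finite support of the derived query
      refine ⟨S ∪ T.image γ, ?_, ?_⟩
      · intro t ht
        have hsupp : CLP.Trm.supp t (⇑γ '' ↑T) :=
          hT'.1 t (List.mem_append_right _ ht)
        intro v w hvw
        refine hsupp v w (fun x hx => hvw x ?_)
        obtain ⟨y, hy, rfl⟩ := hx
        exact Finset.mem_coe.mpr (Finset.mem_union_right _
          (Finset.mem_image_of_mem _ (Finset.mem_coe.mp hy)))
      · have h := stepCns_supp (r.rename γ) Q ↑S (⇑γ '' ↑T) hS hT'
        intro v w hvw
        refine h v w (fun x hx => hvw x ?_)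
        rcases hx with hx | hx
        · exact Finset.mem_coe.mpr (Finset.mem_union_left _ (Finset.mem_coe.mp hx))
        · obtain ⟨y, hy, rfl⟩ := hx
          exact Finset.mem_coe.mpr
            (Finset.mem_union_right _ (Finset.mem_image_of_mem _ (Finset.mem_coe.mp hy)))
    · -- Set(headQuery) ⊆ Set(Q₁)
      rintro A ⟨u, hu, rfl⟩
      obtain ⟨u2, hu2, hA2⟩ := hmg ⟨u, hu, rfl⟩
      have hmem2 : (⟨r.hpred, r.hargs.map (fun t => t u2)⟩ : CLP.Atom D Pr)
          ∈ r.headQuery.descSet := ⟨u2, hu2, rfl⟩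
      obtain ⟨w, hw, hAw⟩ := hQsub hmem2
      have heqw : Q.args.map (fun t => t w) = r.hargs.map (fun t => t u2) :=
        (congrArg CLP.Atom.args hAw).symm
      obtain ⟨v, hv, hbv⟩ := mkv u2 hu2 w hw heqw
      refine ⟨v, hv, ?_⟩
      have hargs2 : r.hargs.map (fun t => t u) = r.bargs.map (fun t => t u2) :=
        congrArg CLP.Atom.args hA2
      show (⟨r.hpred, r.hargs.map (fun t => t u)⟩ : CLP.Atom D Pr) =
        ⟨r.bpred, (r.rename γ).bargs.map (fun t => t v)⟩
      rw [hbv, hpq, hargs2]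
  -- iterate the key lemma
  have base : r.headQuery.finSupp ∧ r.headQuery.pred = r.hpred ∧
      r.headQuery.descSet ⊆ r.headQuery.descSet := by
    refine ⟨⟨T, fun t ht => hT.1 t (List.mem_append_left _ ht), hT.2⟩, rfl, subset_rfl⟩
  choose nxt hstep hprop using key
  let P : CLP.Query ℕ D Pr → Prop := fun Q =>
    Q.finSupp ∧ Q.pred = r.hpred ∧ r.headQuery.descSet ⊆ Q.descSet
  let g : ℕ → {Q : CLP.Query ℕ D Pr // P Q} := fun n =>
    Nat.rec ⟨r.headQuery, base⟩ (fun _ Qh => ⟨nxt Qh.1 Qh.2, hprop Qh.1 Qh.2⟩) n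
  refine ⟨fun n => (g n).1, rfl, fun n => ⟨r, rfl, ?_⟩⟩
  exact hstep (g n).1 (g n).2
end

section
/- There exists a filter Δ and a query Q such that Q is not Δ-more general than itself; that is, the 'Δ-more general than' relation need not be reflexive. -/
namespace CLP

theorem projArgs_singleton_zero_cons {α : Type} (a : α) (l : List α) :
    projArgs {0} (a :: l) = [a] := by
  simp [projArgs, Finset.filter_singleton, Finset.sort_singleton]

theorem Query.map_args_mem_descSet {V D Pr : Type} (Q : Query V D Pr) {v : V → D}
    (hv : Q.constr v) : (⟨Q.pred, Q.args.map (fun t => t v)⟩ : Atom D Pr) ∈ Q.descSet :=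
  ⟨v, hv, rfl⟩

/-- τ(p) = {1}, δ(p) = ⟨p|_τ(X) | X ≥ 1⟩; positions are 0-based here. -/
def firstArgGeOne : PFilter ℕ ℚ Unit where
  pos _ := {0}
  delta _ := ⟨(), [varT 0], fun v => 1 ≤ v 0⟩
  delta_pred _ := rfl
  delta_sat _ := ⟨fun _ => 1, le_rfl⟩

def zeroQuery : Query ℕ ℚ Unit := ⟨(), [fun _ => 0], fun _ => True⟩

theorem not_satisfies_firstArgGeOne_zeroQuery : ¬ firstArgGeOne.Satisfies zeroQuery := by
  intro hsat
  have hzero : (⟨(), [0]⟩ : Atom ℚ Unit) ∈ (zeroQuery.proj firstArgGeOne.pos).descSet := by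
    simpa [Query.proj, zeroQuery, firstArgGeOne, projArgs_singleton_zero_cons] using
      (zeroQuery.proj firstArgGeOne.pos).map_args_mem_descSet (v := 0) trivial
  obtain ⟨v, hv, hatom⟩ := hsat hzero
  simp only [firstArgGeOne, varT, Atom.mk.injEq, List.map_cons, List.map_nil,
    List.cons.injEq, and_true, true_and] at hv hatom
  linarith

end CLP

theorem moreGen_not_refl :
    ∃ (Δ : CLP.PFilter ℕ ℚ Unit) (Q : CLP.Query ℕ ℚ Unit), ¬ Δ.MoreGen Q Q :=
  ⟨CLP.firstArgGeOne, CLP.zeroQuery, fun h => CLP.not_satisfies_firstArgGeOne_zeroQuery h.2⟩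
end
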